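/- (Theorem 2, Convergence of the Objective Value) Assume each f_i : ℝⁿ → ℝ is convex, coercive, and differentiable with L_i-Lipschitz gradient, and let x* be a global minimizer of f(x) = (1/N)·Σ_i f_i(x) with f* = f(x*). Let x^(k) ∈ ℝ^{N×n} be a sequence such that sup_k f̄(x̄^(k)) < ∞, lim_{k→∞} ‖x̃^(k)‖ = 0, and lim_{k→∞} ‖J·g(x^(k))‖ = 0. Then lim_{k→∞} f̄(x̄^(k)) = f* and lim_{k→∞} f̄(x^(k)) = f*. -/

import Mathlib

/-!
Let `F = (1/N) Σᵢ fᵢ` and let `x̄` be the common row of `J·x`. First-order convexity gives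
`F(x̄) - f* ≤ ⟪∇F(x̄), x̄ - x*⟫`, and by the Lipschitz gradients `∇F(x̄)` differs from the row of
`J·g(x)` by at most `L‖x̃‖`. Since `F` is coercive and `F(x̄^(k))` is bounded, the points
`x̄^(k)` stay bounded, so the optimality gap is `O(‖J·g(x^(k))‖ + ‖x̃^(k)‖) → 0`. The same
first-order bound, applied to each `fᵢ` between `xᵢ` and `x̄` with gradients bounded on bounded
sets, gives `|f̄(x) - f̄(x̄)| = O(‖x̃‖)`.
-/

open scoped BigOperators
open Filter

noncomputable section

/-- Row-space: each agent holds a vector in ℝⁿ (Euclidean). -/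
abbrev Vec (n : ℕ) := EuclideanSpace ℝ (Fin n)

/-- A "matrix" in ℝ^{N×n}, represented row-wise. -/
abbrev Mat (N n : ℕ) := Fin N → Vec n

/-- Row-mean operator `B ↦ J·B` with `J = (1/N)·11ᵀ`. -/
def meanM {N n : ℕ} (B : Mat N n) : Mat N n := fun _ => (N : ℝ)⁻¹ • ∑ i, B i

/-- Consensus violation `B̃ = B − B̄`. -/
def tilde {N n : ℕ} (B : Mat N n) : Mat N n := B - meanM B

/-- Frobenius norm of a row-wise matrix. -/
def fnorm {N n : ℕ} (B : Mat N n) : ℝ := Real.sqrt (∑ i, ‖B i‖ ^ 2)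

/-- Spectral norm (ℓ₂ operator norm) of a square matrix. -/
def specNorm {N : ℕ} (A : Matrix (Fin N) (Fin N) ℝ) : ℝ :=
  ‖LinearMap.toContinuousLinearMap (Matrix.toEuclideanLin A)‖

/-- Action of an N×N matrix on a row-wise N×n matrix. -/
def Wact {N n : ℕ} (W : Matrix (Fin N) (Fin N) ℝ) (B : Mat N n) : Mat N n :=
  fun i => ∑ j, W i j • B j

/-- Action of a diagonal matrix `diag a` on a row-wise matrix. -/
def dAct {N n : ℕ} (a : Fin N → ℝ) (B : Mat N n) : Mat N n := fun i => a i • B i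

/-- The matrix of row-wise gradients: i-th row is `∇f_i(x_i)ᵀ`. -/
def gRow {N n : ℕ} (f : Fin N → Vec n → ℝ) (x : Mat N n) : Mat N n :=
  fun i => gradient (f i) (x i)

/-- The all-(1/N) matrix `J = (1/N)·11ᵀ`. -/
def Jmat (N : ℕ) : Matrix (Fin N) (Fin N) ℝ := Matrix.of fun _ _ => (N : ℝ)⁻¹

/-- Double stochasticity of `W`. -/
def DoublyStochastic {N : ℕ} (W : Matrix (Fin N) (Fin N) ℝ) : Prop :=
  (∀ i, ∑ j, W i j = 1) ∧ (∀ j, ∑ i, W i j = 1)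

/-- The aggregate objective `f̄(x) = (1/N)Σᵢ fᵢ(xᵢ)` over the rows of `x`. -/
def fbar {N n : ℕ} (f : Fin N → Vec n → ℝ) (x : Mat N n) : ℝ :=
  (N : ℝ)⁻¹ * ∑ i, f i (x i)

open Set Bornology
open scoped InnerProductSpace Gradient Topology

section Gradient

variable {E : Type*} [NormedAddCommGroup E] [InnerProductSpace ℝ E] [CompleteSpace E]
  {f : E → ℝ} {x y : E}

theorem ConvexOn.inner_gradient_le_sub (hc : ConvexOn ℝ univ f) (hf : DifferentiableAt ℝ f x)
    (y : E) : ⟪∇ f x, y - x⟫_ℝ ≤ f y - f x := by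
  have hline : HasDerivAt (f ∘ AffineMap.lineMap x y) ⟪∇ f x, y - x⟫_ℝ (0 : ℝ) := by
    have hfx : HasFDerivAt f (fderiv ℝ f x) (AffineMap.lineMap x y (0 : ℝ)) := by
      simpa using hf.hasFDerivAt
    have := hfx.comp_hasDerivAt (0 : ℝ) AffineMap.hasDerivAt_lineMap
    rwa [← toDual_gradient, InnerProductSpace.toDual_apply_apply] at this
  simpa [slope_def_field] using (hc.comp_affineMap (AffineMap.lineMap x y)).le_slope_of_hasDerivAt
    (mem_univ 0) (mem_univ 1) one_pos hline

theorem ConvexOn.abs_sub_le_of_norm_gradient_le (hc : ConvexOn ℝ univ f)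
    (hfx : DifferentiableAt ℝ f x) (hfy : DifferentiableAt ℝ f y) {c : ℝ}
    (hx : ‖∇ f x‖ ≤ c) (hy : ‖∇ f y‖ ≤ c) : |f y - f x| ≤ c * ‖y - x‖ := by
  have hxy := hc.inner_gradient_le_sub hfx y
  have hyx := hc.inner_gradient_le_sub hfy x
  have hcx : |⟪∇ f x, y - x⟫_ℝ| ≤ c * ‖y - x‖ :=
    (abs_real_inner_le_norm _ _).trans (by gcongr)
  have hcy : |⟪∇ f y, x - y⟫_ℝ| ≤ c * ‖y - x‖ :=
    (abs_real_inner_le_norm _ _).trans (by rw [norm_sub_rev]; gcongr)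
  rw [abs_le] at hcx hcy ⊢
  constructor <;> linarith

theorem norm_gradient_le_of_lipschitz {L : ℝ} (hL : ∀ y w, ‖∇ f y - ∇ f w‖ ≤ L * ‖y - w‖)
    (x y : E) : ‖∇ f y‖ ≤ ‖∇ f x‖ + L * ‖y - x‖ := by
  linarith [norm_le_norm_add_norm_sub' (∇ f y) (∇ f x), hL y x]

end Gradient

theorem tendsto_cobounded_atTop_iff {E : Type*} [SeminormedAddGroup E] {f : E → ℝ} :
    Tendsto f (cobounded E) atTop ↔ ∀ M, ∃ R, ∀ y, R ≤ ‖y‖ → M ≤ f y := by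
  simp [hasBasis_cobounded_norm.tendsto_iff atTop_basis]

theorem exists_norm_le_of_tendsto_cobounded {E : Type*} [SeminormedAddGroup E] {f : E → ℝ}
    (hf : Tendsto f (cobounded E) atTop) (C : ℝ) : ∃ R, ∀ y, f y ≤ C → ‖y‖ ≤ R := by
  obtain ⟨R, hR⟩ := tendsto_cobounded_atTop_iff.1 hf (C + 1)
  exact ⟨R, fun y hy => le_of_not_ge fun h => by linarith [hR y h]⟩

theorem Filter.tendsto_finset_sum_atTop {ι α M : Type*} [AddCommMonoid M] [PartialOrder M]
    [IsOrderedAddMonoid M] {l : Filter α} {s : Finset ι} (hs : s.Nonempty) {f : ι → α → M}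
    (hf : ∀ i ∈ s, Tendsto (f i) l atTop) : Tendsto (fun a => ∑ i ∈ s, f i a) l atTop := by
  induction hs using Finset.Nonempty.cons_induction with
  | singleton i => simpa using hf i (Finset.mem_singleton_self i)
  | cons i s hi hs ih =>
    simp only [Finset.sum_cons]
    exact (hf i (Finset.mem_cons_self i s)).atTop_add_atTop
      (ih fun j hj => hf j (Finset.mem_cons_of_mem hj))

def avg {N : ℕ} {M : Type*} [AddCommMonoid M] [Module ℝ M] (u : Fin N → M) : M :=
  (N : ℝ)⁻¹ • ∑ i, u i

section Average

variable {N n : ℕ}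

theorem avg_sub {M : Type*} [AddCommGroup M] [Module ℝ M] (u v : Fin N → M) :
    avg (u - v) = avg u - avg v := by
  simp only [avg, Pi.sub_apply, Finset.sum_sub_distrib, smul_sub]

theorem avg_le_avg {u v : Fin N → ℝ} (h : ∀ i, u i ≤ v i) : avg u ≤ avg v :=
  smul_le_smul_of_nonneg_left (Finset.sum_le_sum fun i _ => h i) (by positivity)

theorem norm_avg_le {M : Type*} [SeminormedAddCommGroup M] [NormedSpace ℝ M] {u : Fin N → M}
    {c : ℝ} (hc : 0 ≤ c) (h : ∀ i, ‖u i‖ ≤ c) : ‖avg u‖ ≤ c := by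
  rcases N.eq_zero_or_pos with rfl | hN
  · simpa [avg] using hc
  calc ‖avg u‖ ≤ (N : ℝ)⁻¹ * ∑ _i : Fin N, c := by
        rw [avg, norm_smul, norm_inv, Real.norm_natCast]
        gcongr
        exact norm_sum_le_of_le _ fun i _ => h i
    _ = c := by field_simp; simp

theorem inner_avg_left (u : Fin N → Vec n) (w : Vec n) :
    ⟪avg u, w⟫_ℝ = avg fun i => ⟪u i, w⟫_ℝ := by
  simp only [avg, real_inner_smul_left, sum_inner, smul_eq_mul]

theorem fnorm_nonneg (B : Mat N n) : 0 ≤ fnorm B := Real.sqrt_nonneg _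

theorem norm_le_fnorm (B : Mat N n) (i : Fin N) : ‖B i‖ ≤ fnorm B :=
  Real.le_sqrt_of_sq_le (Finset.single_le_sum (fun j _ => sq_nonneg ‖B j‖) (Finset.mem_univ i))

theorem norm_avg_le_fnorm_meanM (B : Mat N n) : ‖avg B‖ ≤ fnorm (meanM B) := by
  rcases N.eq_zero_or_pos with rfl | hN
  · simpa [avg] using fnorm_nonneg _
  exact norm_le_fnorm (meanM B) ⟨0, hN⟩

theorem norm_sub_avg_le_fnorm_tilde (B : Mat N n) (i : Fin N) :
    ‖B i - avg B‖ ≤ fnorm (tilde B) :=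
  norm_le_fnorm (tilde B) i

end Average

section Objective

variable {N n : ℕ} {f : Fin N → Vec n → ℝ} {L : ℝ}

theorem fbar_eq_avg (B : Mat N n) : fbar f B = avg fun i => f i (B i) := rfl

theorem fbar_const_sub_le_inner (hf : ∀ i, Differentiable ℝ (f i))
    (hconv : ∀ i, ConvexOn ℝ univ (f i)) (y z : Vec n) :
    fbar f (fun _ => y) - fbar f (fun _ => z) ≤ ⟪avg (gRow f fun _ => y), y - z⟫_ℝ := by
  rw [inner_avg_left, fbar_eq_avg, fbar_eq_avg, ← avg_sub]
  refine avg_le_avg fun i => ?_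
  have := (hconv i).inner_gradient_le_sub (hf i y) z
  simp only [Pi.sub_apply, gRow, inner_sub_right] at this ⊢
  linarith

theorem norm_avg_gRow_meanM_le (hL : 0 ≤ L)
    (hLip : ∀ i, ∀ y w : Vec n, ‖∇ (f i) y - ∇ (f i) w‖ ≤ L * ‖y - w‖)
    (B : Mat N n) :
    ‖avg (gRow f (meanM B))‖ ≤ fnorm (meanM (gRow f B)) + L * fnorm (tilde B) := by
  have hdiff : ‖avg (gRow f (meanM B)) - avg (gRow f B)‖ ≤ L * fnorm (tilde B) := by
    rw [← avg_sub]
    refine norm_avg_le (mul_nonneg hL (fnorm_nonneg _)) fun i => (hLip i _ _).trans ?_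
    rw [norm_sub_rev]
    exact mul_le_mul_of_nonneg_left (norm_sub_avg_le_fnorm_tilde B i) hL
  calc ‖avg (gRow f (meanM B))‖
      ≤ ‖avg (gRow f B)‖ + ‖avg (gRow f (meanM B)) - avg (gRow f B)‖ := norm_le_insert' _ _
    _ ≤ _ := add_le_add (norm_avg_le_fnorm_meanM _) hdiff

theorem fbar_meanM_sub_le (hf : ∀ i, Differentiable ℝ (f i))
    (hconv : ∀ i, ConvexOn ℝ univ (f i)) (hL : 0 ≤ L)
    (hLip : ∀ i, ∀ y w : Vec n, ‖∇ (f i) y - ∇ (f i) w‖ ≤ L * ‖y - w‖)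
    (B : Mat N n) (z : Vec n) :
    fbar f (meanM B) - fbar f (fun _ => z) ≤
      (fnorm (meanM (gRow f B)) + L * fnorm (tilde B)) * ‖avg B - z‖ :=
  calc fbar f (meanM B) - fbar f (fun _ => z) ≤ ⟪avg (gRow f (meanM B)), avg B - z⟫_ℝ :=
        fbar_const_sub_le_inner hf hconv (avg B) z
    _ ≤ ‖avg (gRow f (meanM B))‖ * ‖avg B - z‖ := real_inner_le_norm _ _
    _ ≤ _ := mul_le_mul_of_nonneg_right (norm_avg_gRow_meanM_le hL hLip B) (norm_nonneg _)

theorem abs_fbar_sub_fbar_meanM_le (hf : ∀ i, Differentiable ℝ (f i))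
    (hconv : ∀ i, ConvexOn ℝ univ (f i)) (hL : 0 ≤ L)
    (hLip : ∀ i, ∀ y w : Vec n, ‖∇ (f i) y - ∇ (f i) w‖ ≤ L * ‖y - w‖)
    (B : Mat N n) (z : Vec n) :
    |fbar f B - fbar f (meanM B)| ≤
      (fnorm (gRow f fun _ => z) + L * (‖avg B - z‖ + fnorm (tilde B))) * fnorm (tilde B) := by
  set c := fnorm (gRow f fun _ => z) + L * (‖avg B - z‖ + fnorm (tilde B))
  have hc : 0 ≤ c := add_nonneg (fnorm_nonneg _)
    (mul_nonneg hL (add_nonneg (norm_nonneg _) (fnorm_nonneg _)))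
  have hgrad : ∀ i y, ‖y - avg B‖ ≤ fnorm (tilde B) → ‖∇ (f i) y‖ ≤ c := fun i y hy =>
    calc ‖∇ (f i) y‖ ≤ ‖∇ (f i) z‖ + L * ‖y - z‖ := norm_gradient_le_of_lipschitz (hLip i) z y
      _ ≤ c := add_le_add (norm_le_fnorm (gRow f fun _ => z) i) (mul_le_mul_of_nonneg_left
          (by linarith [norm_sub_le_norm_sub_add_norm_sub y (avg B) z]) hL)
  rw [← Real.norm_eq_abs, fbar_eq_avg, fbar_eq_avg, ← avg_sub]
  refine norm_avg_le (mul_nonneg hc (fnorm_nonneg _)) fun i => ?_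
  have hBi := norm_sub_avg_le_fnorm_tilde B i
  calc ‖f i (B i) - f i (avg B)‖ ≤ c * ‖B i - avg B‖ :=
        (hconv i).abs_sub_le_of_norm_gradient_le (hf i _) (hf i _)
          (hgrad i _ (by simpa using fnorm_nonneg _)) (hgrad i _ hBi)
    _ ≤ c * fnorm (tilde B) := mul_le_mul_of_nonneg_left hBi hc

theorem tendsto_fbar_const_cobounded [NeZero N]
    (hcoer : ∀ i, Tendsto (f i) (cobounded (Vec n)) atTop) :
    Tendsto (fun y => fbar f fun _ => y) (cobounded (Vec n)) atTop :=
  (Filter.tendsto_finset_sum_atTop Finset.univ_nonempty fun i _ => hcoer i).const_mul_atTop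
    (inv_pos.2 (Nat.cast_pos.2 (NeZero.pos N)))

end Objective

theorem stmt19_general (N n : ℕ) (hN : 1 ≤ N)
    (f : Fin N → Vec n → ℝ) (hf : ∀ i, Differentiable ℝ (f i))
    (hconv : ∀ i, ConvexOn ℝ Set.univ (f i))
    (hcoer : ∀ i, ∀ M : ℝ, ∃ R : ℝ, ∀ y : Vec n, R ≤ ‖y‖ → M ≤ f i y)
    (L : ℝ) (hL : 0 ≤ L)
    (hLip : ∀ i, ∀ y w : Vec n, ‖gradient (f i) y - gradient (f i) w‖ ≤ L * ‖y - w‖)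
    (xstar : Vec n) (fstar : ℝ)
    (hfstar : fstar = (N : ℝ)⁻¹ * ∑ i, f i xstar)
    (hmin : ∀ y : Vec n, fstar ≤ (N : ℝ)⁻¹ * ∑ i, f i y)
    (x : ℕ → Mat N n)
    (hbdd : ∃ C : ℝ, ∀ k, fbar f (meanM (x k)) ≤ C)
    (hxt : Filter.Tendsto (fun k => fnorm (tilde (x k))) Filter.atTop (nhds 0))
    (hg : Filter.Tendsto (fun k => fnorm (meanM (gRow f (x k)))) Filter.atTop (nhds 0)) :
    Filter.Tendsto (fun k => fbar f (meanM (x k))) Filter.atTop (nhds fstar) ∧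
      Filter.Tendsto (fun k => fbar f (x k)) Filter.atTop (nhds fstar) := by
  have : NeZero N := ⟨by omega⟩
  obtain ⟨C, hC⟩ := hbdd
  obtain ⟨R, hR⟩ := exists_norm_le_of_tendsto_cobounded
    (tendsto_fbar_const_cobounded fun i => tendsto_cobounded_atTop_iff.2 (hcoer i)) C
  set D := R + ‖xstar‖
  have hD : ∀ k, ‖avg (x k) - xstar‖ ≤ D := fun k =>
    (norm_sub_le _ _).trans (add_le_add_left (hR _ (hC k)) _)
  have hgap : Tendsto (fun k => fbar f (meanM (x k)) - fstar) atTop (𝓝 0) := by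
    refine squeeze_zero (fun k => sub_nonneg.2 (hmin _)) (fun k => ?_)
      (by simpa using (hg.add (hxt.const_mul L)).mul_const D)
    rw [hfstar]
    exact (fbar_meanM_sub_le hf hconv hL hLip (x k) xstar).trans (mul_le_mul_of_nonneg_left (hD k)
      (add_nonneg (fnorm_nonneg _) (mul_nonneg hL (fnorm_nonneg _))))
  have hcons : Tendsto (fun k => fbar f (x k) - fbar f (meanM (x k))) atTop (𝓝 0) := by
    refine squeeze_zero_norm (fun k => ?_)
      (by simpa using ((tendsto_const_nhds (x := fnorm (gRow f fun _ => xstar))).add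
        (((tendsto_const_nhds (x := D)).add hxt).const_mul L)).mul hxt)
    exact (abs_fbar_sub_fbar_meanM_le hf hconv hL hLip (x k) xstar).trans
      (by gcongr; exacts [fnorm_nonneg _, hD k])
  have hmean := tendsto_sub_nhds_zero_iff.1 hgap
  exact ⟨hmean, by simpa using hmean.add hcons⟩

/-- Theorem 2 (Convergence of the objective value): for convex, coercive, Lipschitz-smooth
`fᵢ` with aggregate minimum `f*`, if `f̄(x̄^(k))` is bounded above, `‖x̃^(k)‖ → 0` and
`‖J·g(x^(k))‖ → 0`, then `f̄(x̄^(k)) → f*` and `f̄(x^(k)) → f*`. -/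
theorem stmt19 (N n : ℕ) (hN : 1 ≤ N) (hn : 1 ≤ n)
    (f : Fin N → Vec n → ℝ) (hf : ∀ i, Differentiable ℝ (f i))
    (hconv : ∀ i, ConvexOn ℝ Set.univ (f i))
    (hcoer : ∀ i, ∀ M : ℝ, ∃ R : ℝ, ∀ y : Vec n, R ≤ ‖y‖ → M ≤ f i y)
    (L : ℝ) (hL : 0 ≤ L)
    (hLip : ∀ i, ∀ y w : Vec n, ‖gradient (f i) y - gradient (f i) w‖ ≤ L * ‖y - w‖)
    (xstar : Vec n) (fstar : ℝ)
    (hfstar : fstar = (N : ℝ)⁻¹ * ∑ i, f i xstar)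
    (hmin : ∀ y : Vec n, fstar ≤ (N : ℝ)⁻¹ * ∑ i, f i y)
    (x : ℕ → Mat N n)
    (hbdd : ∃ C : ℝ, ∀ k, fbar f (meanM (x k)) ≤ C)
    (hxt : Filter.Tendsto (fun k => fnorm (tilde (x k))) Filter.atTop (nhds 0))
    (hg : Filter.Tendsto (fun k => fnorm (meanM (gRow f (x k)))) Filter.atTop (nhds 0)) :
    Filter.Tendsto (fun k => fbar f (meanM (x k))) Filter.atTop (nhds fstar) ∧
      Filter.Tendsto (fun k => fbar f (x k)) Filter.atTop (nhds fstar) :=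
  stmt19_general N n hN f hf hconv hcoer L hL hLip xstar fstar hfstar hmin x hbdd hxt hg
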